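/- arXiv:2505.13396 — 2 statements merged into one kernel-verified Lean document; each statement's English description precedes it below -/
import Mathlib

section
/- Let G be a finite simple graph on n ≥ 1 vertices. Then for every real λ with 0 < λ ≤ 1/n, one has V_G(λ) ≤ λ/(1+λ)², where λ/(1+λ)² is the variance fraction of the empty graph on n vertices. -/
open scoped Classical

/-- The finset of independent sets of a finite simple graph (the empty set counts). -/
noncomputable def indepSets {V : Type*} [Fintype V] (G : SimpleGraph V) : Finset (Finset V) :=
  Finset.univ.filter fun I => ∀ u ∈ I, ∀ v ∈ I, ¬ G.Adj u v

/-- The hard-core partition function `Z_G(λ) = Σ_{I independent} λ^|I|`. -/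
noncomputable def hcZ {V : Type*} [Fintype V] (G : SimpleGraph V) (l : ℝ) : ℝ :=
  ∑ I ∈ indepSets G, l ^ I.card

/-- The occupancy fraction `E_G(λ) = λ Z_G'(λ)/(n Z_G(λ))`, i.e. `(1/n)` times the
expected size of an independent set from the hard-core model; note
`λ Z_G'(λ) = Σ_I |I| λ^|I|`. -/
noncomputable def hcE {V : Type*} [Fintype V] (G : SimpleGraph V) (l : ℝ) : ℝ :=
  (∑ I ∈ indepSets G, (I.card : ℝ) * l ^ I.card) / ((Fintype.card V : ℝ) * hcZ G l)

/-- The variance fraction `V_G(λ) = λ (d/dλ) E_G(λ)`, i.e. `(1/n)` times the variance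
of the size of an independent set from the hard-core model:
`V_G(λ) = (1/n)(𝔼|I|² - (𝔼|I|)²)`. -/
noncomputable def hcV {V : Type*} [Fintype V] (G : SimpleGraph V) (l : ℝ) : ℝ :=
  ((∑ I ∈ indepSets G, (I.card : ℝ) ^ 2 * l ^ I.card) / hcZ G l
      - ((∑ I ∈ indepSets G, (I.card : ℝ) * l ^ I.card) / hcZ G l) ^ 2) /
    (Fintype.card V : ℝ)


/-!
Write `Z = Σ_I λ^|I|`, `S₁ = Σ_I |I| λ^|I|` and `S₂ = Σ_I |I|² λ^|I|` over the independent sets.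
Removing a vertex `v` from the independent sets containing it is injective and lands in those
avoiding `v`, so the weight of the sets containing `v` is at most `λ/(1+λ)` of the total. Double
counting then gives `(1+λ) S₁ ≤ nλ Z` and, applying the same argument inside the family of sets
containing a fixed `u`, `(1+λ) S₂ ≤ (1+nλ) S₁`. With `x = (1+λ) S₁` these combine to
`(1+λ)² (S₂ Z - S₁²) ≤ nλ Z² - (nλZ - x)(Z - x)`, and both factors are nonnegative once `nλ ≤ 1`.
-/

open Finset

section LowerSetMoments

variable {V : Type*}

theorem sum_card_mul_eq_sum_sum_filter_mem [Fintype V] (s : Finset (Finset V))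
    (w : Finset V → ℝ) : ∑ I ∈ s, (#I : ℝ) * w I = ∑ v, ∑ I ∈ s with v ∈ I, w I := by
  simp_rw [sum_filter]
  rw [sum_comm]
  refine sum_congr rfl fun I _ => ?_
  rw [← sum_filter, filter_mem_eq_inter, univ_inter, sum_const, nsmul_eq_mul]

theorem one_add_mul_sum_filter_mem_le {A : Finset (Finset V)} {l : ℝ} (hl : 0 ≤ l) {v : V}
    (hA : ∀ I ∈ A, v ∈ I → I.erase v ∈ A) :
    (1 + l) * ∑ I ∈ A with v ∈ I, l ^ #I ≤ l * ∑ I ∈ A, l ^ #I := by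
  have hinj : Set.InjOn (·.erase v) (A.filter (v ∈ ·) : Set (Finset V)) := by
    intro I hI J hJ h
    rw [mem_coe, mem_filter] at hI hJ
    rw [← insert_erase hI.2, ← insert_erase hJ.2]
    exact congrArg (insert v) h
  have himage : (A.filter (v ∈ ·)).image (·.erase v) ⊆ A.filter (v ∉ ·) := by
    simp only [subset_iff, mem_image, mem_filter]
    rintro _ ⟨I, ⟨hI, hvI⟩, rfl⟩
    exact ⟨hA I hI hvI, notMem_erase v I⟩
  have hpaired : ∑ I ∈ A with v ∈ I, l ^ #I ≤ l * ∑ I ∈ A with v ∉ I, l ^ #I :=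
    calc ∑ I ∈ A with v ∈ I, l ^ #I = l * ∑ I ∈ A with v ∈ I, l ^ #(I.erase v) := by
          rw [mul_sum]
          refine sum_congr rfl fun I hI => ?_
          rw [← card_erase_add_one (mem_filter.mp hI).2, pow_succ']
      _ = l * ∑ J ∈ (A.filter (v ∈ ·)).image (·.erase v), l ^ #J := by rw [sum_image hinj]
      _ ≤ l * ∑ I ∈ A with v ∉ I, l ^ #I := mul_le_mul_of_nonneg_left
          (sum_le_sum_of_subset_of_nonneg himage fun _ _ _ => pow_nonneg hl _) hl
  have hsplit := sum_filter_add_sum_filter_not A (v ∈ ·) (l ^ #·)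
  linear_combination hpaired + l * hsplit

variable [Fintype V] {s : Finset (Finset V)} {l : ℝ}

theorem one_add_mul_sum_card_mul_pow_le (hs : IsLowerSet (s : Set (Finset V))) (hl : 0 ≤ l) :
    (1 + l) * ∑ I ∈ s, (#I : ℝ) * l ^ #I ≤ Fintype.card V * l * ∑ I ∈ s, l ^ #I := by
  rw [sum_card_mul_eq_sum_sum_filter_mem, mul_sum]
  calc ∑ v, (1 + l) * ∑ I ∈ s with v ∈ I, l ^ #I ≤ ∑ _v : V, l * ∑ I ∈ s, l ^ #I :=
        sum_le_sum fun v _ => one_add_mul_sum_filter_mem_le hl fun I hI _ =>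
          hs (erase_subset v I) hI
    _ = Fintype.card V * l * ∑ I ∈ s, l ^ #I := by
        rw [sum_const, card_univ, nsmul_eq_mul, mul_assoc]

theorem one_add_mul_sum_filter_mem_card_mul_pow_le (hs : IsLowerSet (s : Set (Finset V)))
    (hl : 0 ≤ l) (u : V) :
    (1 + l) * ∑ I ∈ s with u ∈ I, (#I : ℝ) * l ^ #I
      ≤ (1 + Fintype.card V * l) * ∑ I ∈ s with u ∈ I, l ^ #I := by
  set A := s.filter (u ∈ ·)
  have hoff : ∀ v ∈ univ.erase u,
      (1 + l) * ∑ I ∈ A with v ∈ I, l ^ #I ≤ l * ∑ I ∈ A, l ^ #I := fun v hv =>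
    one_add_mul_sum_filter_mem_le hl fun I hI _ => by
      rw [mem_filter] at hI ⊢
      exact ⟨hs (erase_subset v I) hI.1, mem_erase.mpr ⟨(ne_of_mem_erase hv).symm, hI.2⟩⟩
  have hdiag : A.filter (u ∈ ·) = A := filter_true_of_mem fun I hI => (mem_filter.mp hI).2
  have hcard : ((univ.erase u).card : ℝ) + 1 = Fintype.card V := by
    exact_mod_cast card_erase_add_one (mem_univ u)
  rw [sum_card_mul_eq_sum_sum_filter_mem, mul_sum, ← add_sum_erase _ _ (mem_univ u), hdiag]
  calc _ ≤ (1 + l) * ∑ I ∈ A, l ^ #I + ∑ _v ∈ univ.erase u, l * ∑ I ∈ A, l ^ #I :=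
        add_le_add le_rfl (sum_le_sum hoff)
    _ = _ := by rw [sum_const, nsmul_eq_mul, ← hcard]; ring

theorem one_add_mul_sum_sq_card_mul_pow_le (hs : IsLowerSet (s : Set (Finset V)))
    (hl : 0 ≤ l) :
    (1 + l) * ∑ I ∈ s, (#I : ℝ) ^ 2 * l ^ #I
      ≤ (1 + Fintype.card V * l) * ∑ I ∈ s, (#I : ℝ) * l ^ #I := by
  simp_rw [sq, mul_assoc]
  rw [sum_card_mul_eq_sum_sum_filter_mem, sum_card_mul_eq_sum_sum_filter_mem s (l ^ #·),
    mul_sum, mul_sum]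
  exact sum_le_sum fun u _ => one_add_mul_sum_filter_mem_card_mul_pow_le hs hl u

end LowerSetMoments

theorem variance_le_of_moment_bounds {N l Z S₁ S₂ : ℝ} (hN : 0 < N) (hl : 0 ≤ l)
    (hNl : N * l ≤ 1) (hZ : 0 < Z) (h₁ : (1 + l) * S₁ ≤ N * l * Z)
    (h₂ : (1 + l) * S₂ ≤ (1 + N * l) * S₁) :
    (S₂ / Z - (S₁ / Z) ^ 2) / N ≤ l / (1 + l) ^ 2 := by
  set x := (1 + l) * S₁
  have hxZ : x ≤ Z := h₁.trans (by nlinarith)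
  have hkey : (1 + l) ^ 2 * (S₂ * Z - S₁ ^ 2) ≤ N * l * Z ^ 2 := by
    have h₂' := mul_le_mul_of_nonneg_right h₂ (by positivity : 0 ≤ (1 + l) * Z)
    nlinarith [mul_nonneg (sub_nonneg.mpr h₁) (sub_nonneg.mpr hxZ)]
  have hvar : S₂ / Z - (S₁ / Z) ^ 2 = (S₂ * Z - S₁ ^ 2) / Z ^ 2 := by field_simp
  rw [div_le_div_iff₀ hN (by positivity), hvar, div_mul_eq_mul_div, div_le_iff₀ (by positivity)]
  linarith

theorem isLowerSet_indepSets {V : Type*} [Fintype V] (G : SimpleGraph V) :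
    IsLowerSet (indepSets G : Set (Finset V)) := fun I J hJI hI => by
  simp only [indepSets, coe_filter, mem_univ, true_and] at hI ⊢
  exact fun u hu v hv => hI u (hJI hu) v (hJI hv)

theorem hcZ_pos {V : Type*} [Fintype V] (G : SimpleGraph V) {l : ℝ} (hl : 0 ≤ l) :
    0 < hcZ G l := by
  have hempty : ∅ ∈ indepSets G := by simp [indepSets]
  calc (0 : ℝ) < l ^ #(∅ : Finset V) := by simp
    _ ≤ hcZ G l := single_le_sum (f := (l ^ #·)) (fun _ _ => pow_nonneg hl _) hempty

theorem stmt3_general {V : Type*} [Fintype V] (G : SimpleGraph V)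
    (l : ℝ) (hl : 0 < l)
    (hl' : l ≤ 1 / (Fintype.card V : ℝ)) :
    hcV G l ≤ l / (1 + l) ^ 2 := by
  have hN : (0 : ℝ) < Fintype.card V := one_div_pos.mp (hl.trans_le hl')
  have hNl : (Fintype.card V : ℝ) * l ≤ 1 := by rwa [le_div_iff₀ hN, mul_comm] at hl'
  exact variance_le_of_moment_bounds hN hl.le hNl (hcZ_pos G hl.le)
    (one_add_mul_sum_card_mul_pow_le (isLowerSet_indepSets G) hl.le)
    (one_add_mul_sum_sq_card_mul_pow_le (isLowerSet_indepSets G) hl.le)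

theorem stmt3 {V : Type*} [Fintype V] (G : SimpleGraph V)
    (hn : 1 ≤ Fintype.card V) (l : ℝ) (hl : 0 < l)
    (hl' : l ≤ 1 / (Fintype.card V : ℝ)) :
    hcV G l ≤ l / (1 + l) ^ 2 :=
  stmt3_general G l hl hl'
end

section
/- Let λ, β, γ > 0 be reals and let G be a finite simple graph on n ≥ 1 vertices that has local (β,γ)-occupancy at fugacity λ. Then (1/n)·Σ_{u∈V(G)} p_u·(β + d_u·γ) ≥ 1, where p_u is the probability that u lies in a random independent set from the hard-core model on G at fugacity λ. -/
open scoped Classical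

/-- The probability that vertex `u` lies in a random independent set drawn from the
hard-core model on `G` at fugacity `λ`. -/
noncomputable def hcMarginal {V : Type*} [Fintype V] (G : SimpleGraph V) (l : ℝ) (u : V) : ℝ :=
  (∑ I ∈ (indepSets G).filter (fun I => u ∈ I), l ^ I.card) / hcZ G l

/-- The finset of independent sets of `G` contained in a vertex subset `S`; these are
exactly the independent sets of the induced subgraph `G[S]`. -/
noncomputable def indepSetsIn {V : Type*} [Fintype V] (G : SimpleGraph V) (S : Finset V) :
    Finset (Finset V) :=
  S.powerset.filter fun I => ∀ u ∈ I, ∀ v ∈ I, ¬ G.Adj u v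

/-- The hard-core partition function `Z_F(λ)` of the induced subgraph `F = G[S]`. -/
noncomputable def hcZIn {V : Type*} [Fintype V] (G : SimpleGraph V) (S : Finset V) (l : ℝ) : ℝ :=
  ∑ I ∈ indepSetsIn G S, l ^ I.card

/-- `λ Z_F'(λ) = Σ_{I ⊆ S independent} |I| λ^|I|` for the induced subgraph `F = G[S]`. -/
noncomputable def hcZIn' {V : Type*} [Fintype V] (G : SimpleGraph V) (S : Finset V) (l : ℝ) : ℝ :=
  ∑ I ∈ indepSetsIn G S, (I.card : ℝ) * l ^ I.card

/-- `G` has local `(β,γ)`-occupancy at fugacity `λ`: for every vertex `u` and every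
induced subgraph `F = G[S]` with `S ⊆ N(u)`,
`β (λ/(1+λ)) (1/Z_F(λ)) + γ (λ Z_F'(λ)/Z_F(λ)) ≥ 1`. -/
def LocalOccupancy {V : Type*} [Fintype V] (G : SimpleGraph V) (l β γ : ℝ) : Prop :=
  ∀ u : V, ∀ S ⊆ G.neighborFinset u,
    1 ≤ β * (l / (1 + l)) * (1 / hcZIn G S l) + γ * (hcZIn' G S l / hcZIn G S l)

/-!
Fix a vertex `u` and condition a hard-core random independent set `I` on its part `J` outside
the closed neighbourhood `N[u]`. Given `J`, the set `I ∩ N[u]` is either `{u}` or an independent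
set `K` of `G[S]`, where `S ⊆ N(u)` consists of the neighbours of `u` with no neighbour in `J`.
Local occupancy for `S` and for `∅` gives `λ + Z_S ≤ βλ + γ λ Z_S'`, which says that
`β·1[u ∈ I] + γ·|I ∩ N(u)| ≥ 1` holds on average over each fibre, hence on average over `I`:
`Z ≤ β Z_u + γ Σ_{v ∈ N(u)} Z_v`, where `Z_v` is the weight of the independent sets
containing `v`.
Summing over `u` and counting each `Z_v` once for each of the `d_v` neighbours of `v` gives
`n Z ≤ Σ_v Z_v (β + d_v γ)`.
-/

open Finset

section HardCore

variable {V : Type*} [Fintype V] (G : SimpleGraph V)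

noncomputable def uncovered (J T : Finset V) : Finset V :=
  T.filter fun v => ∀ w ∈ J, ¬ G.Adj v w

lemma mem_indepSets {I : Finset V} :
    I ∈ indepSets G ↔ ∀ u ∈ I, ∀ v ∈ I, ¬ G.Adj u v := by
  simp [indepSets]

lemma mem_indepSetsIn {S I : Finset V} :
    I ∈ indepSetsIn G S ↔ I ⊆ S ∧ ∀ u ∈ I, ∀ v ∈ I, ¬ G.Adj u v := by
  simp [indepSetsIn]

/-- An independent set `I` corresponds to the pair `(I \ T, I ∩ T)`. -/
theorem sum_indepSets_eq_sum_indepSetsIn_compl {M : Type*} [AddCommMonoid M] (T : Finset V)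
    (g : Finset V → M) :
    ∑ I ∈ indepSets G, g I =
      ∑ J ∈ indepSetsIn G Tᶜ, ∑ K ∈ indepSetsIn G (uncovered G J T), g (J ∪ K) := by
  rw [sum_sigma']
  refine sum_nbij' (fun I => ⟨I \ T, I ∩ T⟩) (fun p => p.1 ∪ p.2) ?_ ?_ ?_ ?_ ?_
  · intro I hI
    simp only [mem_indepSets] at hI
    simp only [mem_sigma, mem_indepSetsIn, uncovered, subset_iff, mem_sdiff,
      mem_inter, mem_compl, mem_filter]
    grind
  · rintro ⟨J, K⟩ h
    simp only [mem_sigma, mem_indepSetsIn, uncovered, subset_iff, mem_compl,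
      mem_filter] at h
    simp only [mem_indepSets, mem_union]
    grind [G.adj_symm]
  · intro I _
    simp [sdiff_union_inter]
  · rintro ⟨J, K⟩ h
    simp only [mem_sigma, mem_indepSetsIn, uncovered, subset_iff, mem_compl,
      mem_filter] at h
    simp only [Sigma.mk.injEq, heq_eq_eq]
    constructor <;> ext x <;> simp only [mem_sdiff, mem_inter, mem_union] <;> grind
  · intro I _
    simp [sdiff_union_inter]

theorem sum_sum_neighborFinset {M : Type*} [AddCommMonoid M] (f : V → M) :
    ∑ u, ∑ v ∈ G.neighborFinset u, f v = ∑ v, G.degree v • f v := by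
  simp_rw [G.neighborFinset_eq_filter, sum_filter]
  rw [sum_comm]
  refine sum_congr rfl fun v _ => ?_
  rw [← sum_filter, sum_const, ← G.card_neighborFinset_eq_degree, G.neighborFinset_eq_filter]
  simp_rw [G.adj_comm]

variable (l : ℝ)

noncomputable def hcWeight (u : V) : ℝ :=
  ∑ I ∈ (indepSets G).filter (fun I => u ∈ I), l ^ #I

lemma hcMarginal_eq (u : V) : hcMarginal G l u = hcWeight G l u / hcZ G l := rfl

lemma sum_card_inter_mul_pow (S : Finset V) :
    ∑ I ∈ indepSets G, (#(I ∩ S) : ℝ) * l ^ #I = ∑ v ∈ S, hcWeight G l v := by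
  calc ∑ I ∈ indepSets G, (#(I ∩ S) : ℝ) * l ^ #I
      = ∑ I ∈ indepSets G, ∑ v ∈ S, if v ∈ I then l ^ #I else 0 := by
        refine sum_congr rfl fun I _ => ?_
        rw [sum_ite_mem, sum_const, nsmul_eq_mul, inter_comm]
    _ = ∑ v ∈ S, hcWeight G l v := by
        rw [sum_comm]
        simp_rw [hcWeight, sum_filter]

noncomputable def vertexSlack (β γ : ℝ) (u : V) (I : Finset V) : ℝ :=
  (β * (if u ∈ I then 1 else 0) + γ * #(I ∩ G.neighborFinset u) - 1) * l ^ #I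

lemma sum_vertexSlack (β γ : ℝ) (u : V) :
    ∑ I ∈ indepSets G, vertexSlack G l β γ u I =
      β * hcWeight G l u + γ * ∑ v ∈ G.neighborFinset u, hcWeight G l v - hcZ G l := by
  simp only [vertexSlack, sub_mul, add_mul, sum_sub_distrib, sum_add_distrib, mul_assoc,
    ← mul_sum, ite_mul, one_mul, zero_mul, ← sum_filter, sum_card_inter_mul_pow]
  rfl

variable {G l} {β γ : ℝ}

lemma hcZIn_empty : hcZIn G ∅ l = 1 := by
  simp [hcZIn, indepSetsIn, filter_singleton]

lemma hcZIn'_empty : hcZIn' G ∅ l = 0 := by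
  simp [hcZIn', indepSetsIn, filter_singleton]

lemma one_le_hcZIn (hl : 0 ≤ l) (S : Finset V) : 1 ≤ hcZIn G S l := by
  simpa [hcZIn] using single_le_sum (f := fun I : Finset V => l ^ #I) (fun _ _ => by positivity)
    (show ∅ ∈ indepSetsIn G S by simp [indepSetsIn])

lemma one_le_hcZ (hl : 0 ≤ l) : 1 ≤ hcZ G l := by
  simpa [hcZ] using single_le_sum (f := fun I : Finset V => l ^ #I) (fun _ _ => by positivity)
    (show ∅ ∈ indepSets G by simp [indepSets])

lemma indepSetsIn_insert_of_subset_neighborFinset {u : V} {S : Finset V}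
    (hS : S ⊆ G.neighborFinset u) :
    indepSetsIn G (insert u S) = insert {u} (indepSetsIn G S) := by
  have hu : u ∉ S := fun h => by simpa using hS h
  ext I
  simp only [mem_insert, mem_indepSetsIn, subset_iff, SimpleGraph.mem_neighborFinset] at hS ⊢
  constructor
  · rintro ⟨hIS, hI⟩
    by_cases huI : u ∈ I
    · left; ext x; simp only [mem_singleton]; grind
    · right; grind
  · rintro (rfl | ⟨hIS, hI⟩)
    · simp
    · grind

lemma uncovered_insert_of_subset_compl {u : V} {J : Finset V}
    (hJ : J ⊆ (insert u (G.neighborFinset u))ᶜ) :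
    uncovered G J (insert u (G.neighborFinset u)) =
      insert u (uncovered G J (G.neighborFinset u)) := by
  rw [uncovered, filter_insert, if_pos]
  · rfl
  intro w hw huw
  exact mem_compl.1 (hJ hw) (mem_insert_of_mem (by simpa using huw))

lemma vertexSlack_union_singleton {u : V} {J : Finset V}
    (hJ : J ⊆ (insert u (G.neighborFinset u))ᶜ) :
    vertexSlack G l β γ u (J ∪ {u}) = (β - 1) * l * l ^ #J := by
  have huJ : u ∉ J := fun h => by simpa using hJ h
  have hN : (J ∪ {u}) ∩ G.neighborFinset u = ∅ := by
    refine eq_empty_of_forall_notMem fun x hx => ?_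
    obtain ⟨hxJu, hxN⟩ := mem_inter.1 hx
    rcases mem_union.1 hxJu with hxJ | hxu
    · exact mem_compl.1 (hJ hxJ) (mem_insert_of_mem hxN)
    · simp [mem_singleton.1 hxu] at hxN
  rw [vertexSlack, if_pos (mem_union_right _ (mem_singleton_self u)), hN,
    card_union_of_disjoint (disjoint_singleton_right.2 huJ)]
  simp only [card_empty, card_singleton, pow_succ]
  ring

lemma vertexSlack_union_of_subset_neighborFinset {u : V} {J K : Finset V}
    (hJ : J ⊆ (insert u (G.neighborFinset u))ᶜ) (hK : K ⊆ G.neighborFinset u) :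
    vertexSlack G l β γ u (J ∪ K) = (γ * #K - 1) * l ^ #K * l ^ #J := by
  have hJN : Disjoint J (G.neighborFinset u) :=
    disjoint_left.2 fun x hx hxN => mem_compl.1 (hJ hx) (mem_insert_of_mem hxN)
  have huJK : u ∉ J ∪ K := by
    rw [mem_union, not_or]
    exact ⟨fun h => mem_compl.1 (hJ h) (mem_insert_self _ _), fun h => by simpa using hK h⟩
  rw [vertexSlack, if_neg huJK, union_inter_distrib_right, disjoint_iff_inter_eq_empty.1 hJN,
    empty_union, inter_eq_left.2 hK, card_union_of_disjoint (hJN.mono_right hK), pow_add]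
  ring

theorem LocalOccupancy.add_hcZIn_le (hloc : LocalOccupancy G l β γ) (hl : 0 < l) {u : V}
    {S : Finset V} (hS : S ⊆ G.neighborFinset u) :
    l + hcZIn G S l ≤ β * l + γ * hcZIn' G S l := by
  have h_empty : 1 ≤ β * (l / (1 + l)) := by
    simpa [hcZIn_empty, hcZIn'_empty] using hloc u ∅ (empty_subset _)
  have hS : 1 ≤ (β * (l / (1 + l)) + γ * hcZIn' G S l) / hcZIn G S l := by
    convert hloc u S hS using 1
    ring
  rw [one_le_div (one_pos.trans_le (one_le_hcZIn hl.le S))] at hS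
  have hβ : β * l = β * (l / (1 + l)) * (1 + l) := by field_simp
  nlinarith

theorem LocalOccupancy.sum_vertexSlack_nonneg (hloc : LocalOccupancy G l β γ) (hl : 0 < l)
    (u : V) : 0 ≤ ∑ I ∈ indepSets G, vertexSlack G l β γ u I := by
  rw [sum_indepSets_eq_sum_indepSetsIn_compl G (insert u (G.neighborFinset u))]
  refine sum_nonneg fun J hJ => ?_
  have hJN := ((mem_indepSetsIn G).1 hJ).1
  set S := uncovered G J (G.neighborFinset u)
  have hS : S ⊆ G.neighborFinset u := filter_subset _ _
  have huS : {u} ∉ indepSetsIn G S := fun h => by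
    simpa using hS (((mem_indepSetsIn G).1 h).1 (mem_singleton_self u))
  rw [uncovered_insert_of_subset_compl hJN, indepSetsIn_insert_of_subset_neighborFinset hS,
    sum_insert huS, vertexSlack_union_singleton hJN,
    sum_congr rfl fun K hK => vertexSlack_union_of_subset_neighborFinset hJN
      (((mem_indepSetsIn G).1 hK).1.trans hS)]
  calc 0 ≤ (β * l + γ * hcZIn' G S l - (l + hcZIn G S l)) * l ^ #J :=
        mul_nonneg (sub_nonneg.2 (hloc.add_hcZIn_le hl hS)) (by positivity)
    _ = _ := by
        rw [← sum_mul]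
        simp only [sub_mul, sum_sub_distrib, mul_assoc, ← mul_sum, one_mul, hcZIn, hcZIn']
        ring

theorem LocalOccupancy.hcZ_le (hloc : LocalOccupancy G l β γ) (hl : 0 < l) (u : V) :
    hcZ G l ≤ β * hcWeight G l u + γ * ∑ v ∈ G.neighborFinset u, hcWeight G l v := by
  have := hloc.sum_vertexSlack_nonneg hl u
  rw [sum_vertexSlack] at this
  linarith

end HardCore

theorem stmt11_general {V : Type*} [Fintype V] (G : SimpleGraph V) (hn : 1 ≤ Fintype.card V)
    (l β γ : ℝ) (hl : 0 < l)
    (hloc : LocalOccupancy G l β γ) :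
    1 ≤ (1 / (Fintype.card V : ℝ)) *
        ∑ u : V, hcMarginal G l u * (β + (G.degree u : ℝ) * γ) := by
  have hZ : 0 < hcZ G l := one_pos.trans_le (one_le_hcZ hl.le)
  have hsum : (Fintype.card V : ℝ) * hcZ G l ≤
      ∑ u : V, hcWeight G l u * (β + G.degree u * γ) :=
    calc (Fintype.card V : ℝ) * hcZ G l = ∑ _u : V, hcZ G l := by simp
      _ ≤ ∑ u : V, (β * hcWeight G l u + γ * ∑ v ∈ G.neighborFinset u, hcWeight G l v) :=
          sum_le_sum fun u _ => hloc.hcZ_le hl u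
      _ = ∑ u : V, hcWeight G l u * (β + G.degree u * γ) := by
          rw [sum_add_distrib, ← mul_sum, ← mul_sum, sum_sum_neighborFinset, mul_sum, mul_sum,
            ← sum_add_distrib]
          exact sum_congr rfl fun u _ => by rw [nsmul_eq_mul]; ring
  have hmarg : ∑ u : V, hcMarginal G l u * (β + G.degree u * γ) =
      (∑ u : V, hcWeight G l u * (β + G.degree u * γ)) / hcZ G l := by
    simp only [hcMarginal_eq, div_mul_eq_mul_div, sum_div]
  have hn' : (0 : ℝ) < Fintype.card V := by exact_mod_cast hn
  rw [hmarg, one_div, ← div_eq_inv_mul, div_div, one_le_div (by positivity)]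
  linarith

theorem stmt11 {V : Type*} [Fintype V] (G : SimpleGraph V) (hn : 1 ≤ Fintype.card V)
    (l β γ : ℝ) (hl : 0 < l) (hβ : 0 < β) (hγ : 0 < γ)
    (hloc : LocalOccupancy G l β γ) :
    1 ≤ (1 / (Fintype.card V : ℝ)) *
        ∑ u : V, hcMarginal G l u * (β + (G.degree u : ℝ) * γ) :=
  stmt11_general G hn l β γ hl hloc
end
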